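/- For x, y, z in Q_{n-1}, the associator in Q_n satisfies [(x,1),(y,1),(z,1)] = [x,y]·[x,z]·[y,z]·[z,x,y]·[x,z,y]. -/

import Mathlib

/-- The underlying set of the Cayley-Dickson loop `Q n`:
`Q 0 = {±1}` (encoded as `Bool`, `false = 1`, `true = -1`) and `Q (n+1) = Q n × Bool`,
an element `(x, b)` encoding `(x, 0)` if `b = false` and `(x, 1)` if `b = true`. -/
def Q : ℕ → Type
  | 0 => Bool
  | n+1 => Q n × Bool

namespace Q

def one : ∀ n, Q n
  | 0 => false
  | n+1 => (one n, false)

def neg : ∀ n, Q n → Q n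
  | 0, x => !x
  | n+1, (x, b) => (neg n x, b)

def conj : ∀ n, Q n → Q n
  | 0, x => x
  | n+1, (x, false) => (conj n x, false)
  | n+1, (x, true) => (neg n x, true)

/-- Cayley-Dickson doubling multiplication restricted to the loop:
`(x,0)(y,0) = (xy,0)`, `(x,0)(y,1) = (yx,1)`, `(x,1)(y,0) = (xy*,1)`, `(x,1)(y,1) = (-y*x,0)`. -/
def mul : ∀ n, Q n → Q n → Q n
  | 0, x, y => xor x y
  | n+1, (x, false), (y, false) => (mul n x y, false)
  | n+1, (x, false), (y, true)  => (mul n y x, true)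
  | n+1, (x, true),  (y, false) => (mul n x (conj n y), true)
  | n+1, (x, true),  (y, true)  => (neg n (mul n (conj n y) x), false)

instance (n : ℕ) : One (Q n) := ⟨one n⟩
instance (n : ℕ) : Neg (Q n) := ⟨neg n⟩
instance (n : ℕ) : Mul (Q n) := ⟨mul n⟩
instance (n : ℕ) : Star (Q n) := ⟨conj n⟩
/-- In `Q n` the inverse of `x` is its conjugate `x*`. -/
instance (n : ℕ) : Inv (Q n) := ⟨conj n⟩

instance instDecEq : ∀ n, DecidableEq (Q n)
  | 0 => inferInstanceAs (DecidableEq Bool)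
  | n+1 => letI := instDecEq n; inferInstanceAs (DecidableEq (Q n × Bool))

instance instFintype : ∀ n, Fintype (Q n)
  | 0 => inferInstanceAs (Fintype Bool)
  | n+1 => letI := instFintype n; inferInstanceAs (Fintype (Q n × Bool))

/-- Powers in `Q n` (well defined by diassociativity). -/
def pow {n : ℕ} (x : Q n) : ℕ → Q n
  | 0 => 1
  | k+1 => x * pow x k

/-- The embedding `x ↦ (x, 0)` of `Q n` into `Q (n+1)`. -/
def up {n : ℕ} (x : Q n) : Q (n+1) := (x, false)

/-- The map `x ↦ (x, 1)` from `Q n` into `Q (n+1)`. -/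
def up1 {n : ℕ} (x : Q n) : Q (n+1) := (x, true)

/-- The commutator `[x,y]`, defined by `xy = (yx)[x,y]`. -/
def comm {n : ℕ} (x y : Q n) : Q n := (y * x)⁻¹ * (x * y)

/-- The associator `[x,y,z]`, defined by `(xy)z = (x(yz))[x,y,z]`. -/
def assoc {n : ℕ} (x y z : Q n) : Q n := (x * (y * z))⁻¹ * ((x * y) * z)

/-- A subloop of the Cayley-Dickson loop `Q n`: a subset containing `1` and closed
under multiplication and inverses (= conjugates). -/
structure Subloop (n : ℕ) where
  carrier : Set (Q n)
  one_mem : (1 : Q n) ∈ carrier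
  mul_mem : ∀ ⦃x y : Q n⦄, x ∈ carrier → y ∈ carrier → x * y ∈ carrier
  inv_mem : ∀ ⦃x : Q n⦄, x ∈ carrier → x⁻¹ ∈ carrier

/-- The subloop of `Q n` generated by a set `s`. -/
def closure (n : ℕ) (s : Set (Q n)) : Set (Q n) :=
  ⋂₀ {t : Set (Q n) | s ⊆ t ∧ (1 : Q n) ∈ t ∧
      (∀ x ∈ t, ∀ y ∈ t, x * y ∈ t) ∧ (∀ x ∈ t, x⁻¹ ∈ t)}

end Q

/-!
Every element of `Q n` is `±e` for a basis element `e = base x`, and basis elements multiply as in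
`(ℤ/2)ⁿ` (`bitXor`) up to sign. Adding signs in `ℤ/2`, this gives
`sign (x * y) = sign x + sign y + twist (base x) (base y)` and
`sign x⁻¹ = sign x + conjSign (base x)`, and since conjugation reverses products,
`twist v u = twist u v + conjSign u + conjSign v + conjSign (u * v)`. The doubling formulas turn
the associator of `(x,1), (y,1), (z,1)` into `((x⁻¹y)z⁻¹)(x(y⁻¹z))`; both sides of the identity
then have trivial basis part, and their signs agree by this symmetry relation.
-/

namespace Q

variable {n : ℕ}

@[elab_as_elim]
theorem upCases {motive : Q (n+1) → Prop} (up : ∀ x, motive (up x)) (up1 : ∀ x, motive (up1 x))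
    (x : Q (n+1)) : motive x := by
  obtain ⟨x, _ | _⟩ := x
  exacts [up x, up1 x]

@[simp] theorem up_inj {x y : Q n} : up x = up y ↔ x = y :=
  ⟨fun h => congrArg Prod.fst h, congrArg up⟩
@[simp] theorem up1_inj {x y : Q n} : up1 x = up1 y ↔ x = y :=
  ⟨fun h => congrArg Prod.fst h, congrArg up1⟩

theorem one_succ : (1 : Q (n+1)) = up 1 := rfl
@[simp] theorem neg_up (x : Q n) : -up x = up (-x) := rfl
@[simp] theorem neg_up1 (x : Q n) : -up1 x = up1 (-x) := rfl
@[simp] theorem inv_up (x : Q n) : (up x)⁻¹ = up x⁻¹ := rfl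
@[simp] theorem inv_up1 (x : Q n) : (up1 x)⁻¹ = up1 (-x) := rfl
@[simp] theorem up_mul_up (x y : Q n) : up x * up y = up (x * y) := rfl
@[simp] theorem up_mul_up1 (x y : Q n) : up x * up1 y = up1 (y * x) := rfl
@[simp] theorem up1_mul_up (x y : Q n) : up1 x * up y = up1 (x * y⁻¹) := rfl
@[simp] theorem up1_mul_up1 (x y : Q n) : up1 x * up1 y = up (-(y⁻¹ * x)) := rfl

@[simp] protected theorem neg_neg (x : Q n) : - -x = x := by
  induction n with
  | zero => exact Bool.not_not x
  | succ n ih => cases x using upCases <;> simp [ih]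

@[simp] protected theorem inv_neg (x : Q n) : (-x)⁻¹ = -x⁻¹ := by
  induction n with
  | zero => rfl
  | succ n ih => cases x using upCases <;> simp [ih]

@[simp] protected theorem inv_inv (x : Q n) : x⁻¹⁻¹ = x := by
  induction n with
  | zero => rfl
  | succ n ih => cases x using upCases <;> simp [ih]

theorem neg_mul_and_mul_neg (x y : Q n) : -x * y = -(x * y) ∧ x * -y = -(x * y) := by
  induction n with
  | zero => cases x <;> cases y <;> exact ⟨rfl, rfl⟩
  | succ n ih =>
    cases x using upCases <;> cases y using upCases <;> simp [(ih _ _).1, (ih _ _).2]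

@[simp] protected theorem neg_mul (x y : Q n) : -x * y = -(x * y) := (neg_mul_and_mul_neg x y).1
@[simp] protected theorem mul_neg (x y : Q n) : x * -y = -(x * y) := (neg_mul_and_mul_neg x y).2

@[simp] protected theorem inv_one : (1 : Q n)⁻¹ = 1 := by
  induction n with
  | zero => rfl
  | succ n ih => simp [one_succ, ih]

theorem one_mul_and_mul_one (x : Q n) : 1 * x = x ∧ x * 1 = x := by
  induction n with
  | zero => cases x <;> exact ⟨rfl, rfl⟩
  | succ n ih => cases x using upCases <;> simp [one_succ, (ih _).1, (ih _).2]

@[simp] protected theorem one_mul (x : Q n) : 1 * x = x := (one_mul_and_mul_one x).1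
@[simp] protected theorem mul_one (x : Q n) : x * 1 = x := (one_mul_and_mul_one x).2

theorem mul_inv_and_inv_mul (x : Q n) : x * x⁻¹ = 1 ∧ x⁻¹ * x = 1 := by
  induction n with
  | zero => cases x <;> exact ⟨rfl, rfl⟩
  | succ n ih => cases x using upCases <;> simp [one_succ, (ih _).1, (ih _).2]

protected theorem mul_inv_cancel (x : Q n) : x * x⁻¹ = 1 := (mul_inv_and_inv_mul x).1

@[simp] protected theorem mul_inv_rev (x y : Q n) : (x * y)⁻¹ = y⁻¹ * x⁻¹ := by
  induction n with
  | zero => cases x <;> cases y <;> rfl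
  | succ n ih => cases x using upCases <;> cases y using upCases <;> simp [ih]

def sign : ∀ {n}, Q n → Bool
  | 0, x => x
  | _+1, (x, _) => sign x

def base : ∀ {n}, Q n → Q n
  | 0, _ => false
  | _+1, (x, b) => (base x, b)

def bitXor : ∀ {n}, Q n → Q n → Q n
  | 0, x, y => x ^^ y
  | _+1, (x, a), (y, b) => (bitXor x y, a ^^ b)

@[simp] theorem sign_up (x : Q n) : sign (up x) = sign x := rfl
@[simp] theorem sign_up1 (x : Q n) : sign (up1 x) = sign x := rfl
@[simp] theorem base_up (x : Q n) : base (up x) = up (base x) := rfl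
@[simp] theorem base_up1 (x : Q n) : base (up1 x) = up1 (base x) := rfl
@[simp] theorem bitXor_up_up (x y : Q n) : bitXor (up x) (up y) = up (bitXor x y) := rfl
@[simp] theorem bitXor_up_up1 (x y : Q n) : bitXor (up x) (up1 y) = up1 (bitXor x y) := rfl
@[simp] theorem bitXor_up1_up (x y : Q n) : bitXor (up1 x) (up y) = up1 (bitXor x y) := rfl
@[simp] theorem bitXor_up1_up1 (x y : Q n) : bitXor (up1 x) (up1 y) = up (bitXor x y) := rfl

@[simp] theorem sign_neg (x : Q n) : sign (-x) = !sign x := by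
  induction n with
  | zero => rfl
  | succ n ih => cases x using upCases <;> simp [ih]

@[simp] theorem sign_one : sign (1 : Q n) = false := by
  induction n with
  | zero => rfl
  | succ n ih => simp [one_succ, ih]

@[simp] theorem sign_base (x : Q n) : sign (base x) = false := by
  induction n with
  | zero => rfl
  | succ n ih => cases x using upCases <;> simp [ih]

@[simp] theorem base_neg (x : Q n) : base (-x) = base x := by
  induction n with
  | zero => rfl
  | succ n ih => cases x using upCases <;> simp [ih]

@[simp] theorem base_inv (x : Q n) : base x⁻¹ = base x := by
  induction n with
  | zero => rfl
  | succ n ih => cases x using upCases <;> simp [ih]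

@[simp] theorem base_base (x : Q n) : base (base x) = base x := by
  induction n with
  | zero => rfl
  | succ n ih => cases x using upCases <;> simp [ih]

theorem bitXor_comm (x y : Q n) : bitXor x y = bitXor y x := by
  induction n with
  | zero => exact Bool.xor_comm x y
  | succ n ih => cases x using upCases <;> cases y using upCases <;> simp [ih]

theorem bitXor_assoc (x y z : Q n) : bitXor (bitXor x y) z = bitXor x (bitXor y z) := by
  induction n with
  | zero => exact Bool.xor_assoc x y z
  | succ n ih =>
    cases x using upCases <;> cases y using upCases <;> cases z using upCases <;> simp [ih]

theorem bitXor_left_comm (x y z : Q n) : bitXor x (bitXor y z) = bitXor y (bitXor x z) := by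
  rw [← bitXor_assoc, bitXor_comm x y, bitXor_assoc]

@[simp] theorem bitXor_self (x : Q n) : bitXor x x = 1 := by
  induction n with
  | zero => exact Bool.xor_self x
  | succ n ih => cases x using upCases <;> simp [one_succ, ih]

theorem base_bitXor (x y : Q n) : base (bitXor x y) = bitXor (base x) (base y) := by
  induction n with
  | zero => rfl
  | succ n ih => cases x using upCases <;> cases y using upCases <;> simp [ih]

theorem base_mul (x y : Q n) : base (x * y) = bitXor (base x) (base y) := by
  induction n with
  | zero => rfl
  | succ n ih =>
    cases x using upCases <;> cases y using upCases <;> simp [ih, bitXor_comm]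

theorem eq_base_or_eq_neg_base (x : Q n) : x = base x ∨ x = -base x := by
  induction n with
  | zero => cases x; exacts [Or.inl rfl, Or.inr rfl]
  | succ n ih => cases x using upCases <;> simpa using ih _

theorem ext_sign_base {x y : Q n} (hs : sign x = sign y) (hb : base x = base y) : x = y := by
  rcases eq_base_or_eq_neg_base x with hx | hx <;> rcases eq_base_or_eq_neg_base y with hy | hy <;>
    rw [hx, hy, hb] <;> rw [hx, hy] at hs <;> simp at hs

def twist (x y : Q n) : Bool := sign (x * y) ^^ sign x ^^ sign y

def conjSign (x : Q n) : Bool := sign x⁻¹ ^^ sign x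

theorem twist_base_left (x y : Q n) : twist (base x) y = twist x y := by
  rcases eq_base_or_eq_neg_base x with h | h <;> rw [h] <;> simp [twist]

theorem twist_base_right (x y : Q n) : twist x (base y) = twist x y := by
  rcases eq_base_or_eq_neg_base y with h | h <;> rw [h] <;> simp [twist]

theorem conjSign_base (x : Q n) : conjSign (base x) = conjSign x := by
  rcases eq_base_or_eq_neg_base x with h | h <;> rw [h] <;> simp [conjSign]

theorem sign_mul (x y : Q n) : sign (x * y) = (sign x ^^ sign y ^^ twist (base x) (base y)) := by
  rw [twist_base_left, twist_base_right, twist]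
  simp [Bool.xor_left_comm, Bool.xor_comm]

theorem sign_inv (x : Q n) : sign x⁻¹ = (sign x ^^ conjSign (base x)) := by
  rw [conjSign_base, conjSign]
  simp [Bool.xor_comm]

@[simp] theorem twist_one_right (x : Q n) : twist x 1 = false := by simp [twist]

@[simp] theorem conjSign_one : conjSign (1 : Q n) = false := by simp [conjSign]

@[simp] theorem twist_self (x : Q n) : twist x x = conjSign x := by
  rw [← twist_base_right, ← base_inv, twist_base_right, twist, Q.mul_inv_cancel, sign_one,
    Bool.false_xor, conjSign, Bool.xor_comm]

theorem conjSign_bitXor (x y : Q n) : conjSign (bitXor x y) = conjSign (x * y) := by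
  rw [← conjSign_base, base_bitXor, ← base_mul, conjSign_base]

theorem twist_swap (x y : Q n) :
    twist x y = (twist y x ^^ conjSign x ^^ conjSign y ^^ conjSign (bitXor x y)) := by
  have h := congrArg sign (Q.mul_inv_rev x y)
  simp only [sign_inv, sign_mul, base_inv, twist_base_left, twist_base_right, conjSign_base] at h
  rw [conjSign_bitXor]
  generalize twist x y = a, twist y x = b, sign x = c, sign y = d, conjSign x = e,
    conjSign y = f, conjSign (x * y) = g at h ⊢
  revert a b c d e f g
  decide

@[simp] theorem base_comm (x y : Q n) : base (comm x y) = 1 := by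
  simp [comm, base_mul]

@[simp] theorem base_assoc (x y z : Q n) : base (assoc x y z) = 1 := by
  simp [assoc, base_mul, bitXor_comm, bitXor_left_comm]

theorem sign_comm (x y : Q n) : sign (comm x y) =
    (conjSign (base x) ^^ conjSign (base y) ^^ conjSign (bitXor (base x) (base y))) := by
  simp only [comm, sign_mul, sign_inv, base_mul, base_inv, bitXor_comm (base y), twist_self]
  rw [twist_swap (base y)]
  simp [Bool.xor_left_comm, Bool.xor_comm, bitXor_comm]

theorem sign_assoc (x y z : Q n) : sign (assoc x y z) =
    (twist (base y) (base z) ^^ twist (base x) (bitXor (base y) (base z)) ^^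
      twist (base x) (base y) ^^ twist (bitXor (base x) (base y)) (base z)) := by
  simp only [assoc, sign_mul, sign_inv, base_mul, base_inv, bitXor_assoc, twist_self]
  simp [Bool.xor_left_comm, Bool.xor_comm]

theorem assoc_up1_up1_up1_eq (x y z : Q n) :
    assoc (up1 x) (up1 y) (up1 z) = up (x⁻¹ * y * z⁻¹ * (x * (y⁻¹ * z))) := by
  simp [assoc]

end Q

/-- For `x, y, z ∈ Q n`, the associator in `Q (n+1)` satisfies
`[(x,1),(y,1),(z,1)] = [x,y]·[x,z]·[y,z]·[z,x,y]·[x,z,y]`. -/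
theorem Q.assoc_up1_up1_up1 (n : ℕ) (x y z : Q n) :
    Q.assoc (Q.up1 x) (Q.up1 y) (Q.up1 z) =
      Q.up ((((Q.comm x y * Q.comm x z) * Q.comm y z) * Q.assoc z x y) * Q.assoc x z y) := by
  rw [Q.assoc_up1_up1_up1_eq, Q.up_inj]
  apply Q.ext_sign_base
  · simp only [Q.sign_mul, Q.sign_inv, Q.sign_comm, Q.sign_assoc, Q.base_mul, Q.base_inv,
      Q.base_comm, Q.base_assoc, Q.twist_one_right, Q.bitXor_comm, Q.bitXor_left_comm,
      Q.twist_self]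
    -- what is left cancels once the twists `twist (base z) _` from the associators are swapped
    simp only [Q.twist_swap (Q.base z), Q.bitXor_comm, Q.bitXor_left_comm]
    simp [Bool.xor_left_comm, Bool.xor_comm]
  · simp [Q.base_mul, Q.bitXor_comm, Q.bitXor_left_comm]
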